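/- In Γ_Δ(D), let X and Y be vertices with k = d(X,Y) ≥ 1, and for a letter i ≠ x_1 let i∘X denote the out-neighbor of X beginning with i (rotation if i occurs in X, shift otherwise). Then d(i∘X, Y) ≥ d(X,Y) unless i = y_k (the k-th letter of Y), in which case d(i∘X, Y) = d(X,Y) − 1. -/

import Mathlib

/-- `l` is a vertex of the cycle prefix digraph `Γ_Δ(D)`: a sequence of `D`
distinct letters from the alphabet `{1, …, Δ+1}`. -/
def IsVtx (Δ D : ℕ) (l : List ℕ) : Prop :=
  l.length = D ∧ l.Nodup ∧ ∀ x ∈ l, 1 ≤ x ∧ x ≤ Δ + 1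

/-- Adjacency in `Γ_Δ(D, -r)` (for `r = 0` this is `Γ_Δ(D)` itself): arcs are the
rotations `R_k` for `r+2 ≤ k ≤ D` (0-indexed: move the letter at index `j`,
`r+1 ≤ j ≤ D-1`, to the front) and the shifts `S_y` for letters `y` not in the
sequence. -/
def adjR (Δ D r : ℕ) (X Y : List ℕ) : Prop :=
  IsVtx Δ D X ∧ IsVtx Δ D Y ∧
    ((∃ j, r + 1 ≤ j ∧ j < D ∧ Y = X.getD j 0 :: X.eraseIdx j) ∨
     (∃ y, y ∉ X ∧ Y = y :: X.dropLast))

/-- `w` is a directed walk of length `n` from `u` to `v` in the digraph with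
adjacency relation `A`. -/
def IsWalk {V : Type*} (A : V → V → Prop) (u v : V) (n : ℕ) (w : ℕ → V) : Prop :=
  w 0 = u ∧ w n = v ∧ ∀ i < n, A (w i) (w (i + 1))

/-- Directed distance: the least length of a directed walk from `u` to `v`. -/
noncomputable def cpDist {V : Type*} (A : V → V → Prop) (u v : V) : ℕ :=
  sInf {n | ∃ w, IsWalk A u v n w}

/-- `i ∘ X`: the out-neighbor of `X` beginning with the letter `i` (a rotation
if `i` occurs in `X`, a shift otherwise). -/
def comp (i : ℕ) (X : List ℕ) : List ℕ :=
  if i ∈ X then i :: X.erase i else i :: X.dropLast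

/-!
`d(X, Y) ≤ m` holds exactly when the tail `y_{m+1} … y_D` of `Y` is a prefix of the word left
from `X` after deleting the letters `y_1, …, y_m` (`TailPrefix Y m X`). If this holds for `i∘X`
and `m`, it holds for `X` and `m + 1`; if it holds for `X` and `k`, it holds for `y_k∘X` and
`k - 1`. Finally, for `i ≠ y_k` the property of `i∘X` at `k - 1` transfers back to `X`, which
is impossible since `d(X, Y) = k`.
-/

open List

section Lists

variable {α : Type*}

lemma getElem_not_mem_take {Y : List α} (hY : Y.Nodup) {m : ℕ} (hm : m < Y.length) :
    Y[m] ∉ Y.take m := by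
  have := (take_sublist (m + 1) Y).nodup hY
  rw [← take_concat_get' _ _ hm, ← concat_eq_append, nodup_concat] at this
  exact this.1

lemma getElem_not_mem_drop_succ {Y : List α} (hY : Y.Nodup) {m : ℕ} (hm : m < Y.length) :
    Y[m] ∉ Y.drop (m + 1) := by
  have := (drop_sublist m Y).nodup hY
  rw [← getElem_cons_drop hm] at this
  exact (nodup_cons.1 this).1

variable [DecidableEq α]

lemma filter_erase_of_false {p : α → Bool} {i : α} (hi : p i = false) (X : List α) :
    (X.erase i).filter p = X.filter p := by
  rw [← erase_filter, erase_of_not_mem (by simp [hi])]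

lemma length_le_length_filter_not_mem_add {X : List α}
    (hX : X.Nodup) (L : List α) : X.length ≤ (X.filter (· ∉ L)).length + L.length := by
  rw [length_eq_length_filter_add (· ∉ L)]
  have hsub : X.filter (fun a => !decide (a ∉ L)) ⊆ L := fun a ha => by
    simpa using (mem_filter.1 ha).2
  have := ((hX.filter _).subperm hsub).length_le
  omega

lemma filter_not_mem_take_succ {Y : List α} {m : ℕ} (hm : m < Y.length) (X : List α) :
    X.filter (· ∉ Y.take (m + 1)) = X.filter (fun a => a ≠ Y[m] && decide (a ∉ Y.take m)) :=
  filter_congr fun a _ => by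
    rw [← take_concat_get' _ _ hm]
    simp only [mem_append, mem_singleton, not_or, Bool.decide_and, Bool.and_comm]

end Lists

section Walks

variable {V : Type*} {A : V → V → Prop}

lemma isWalk_zero (u : V) : IsWalk A u u 0 (fun _ => u) :=
  ⟨rfl, rfl, fun _ h => absurd h (Nat.not_lt_zero _)⟩

lemma IsWalk.cons {u v y : V} {n : ℕ} {w : ℕ → V} (huv : A u v) (hw : IsWalk A v y n w) :
    IsWalk A u y (n + 1) (fun t => Nat.casesOn t u w) := by
  refine ⟨rfl, hw.2.1, fun t ht => ?_⟩
  cases t with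
  | zero => simpa [hw.1] using huv
  | succ t => exact hw.2.2 t (by omega)

lemma IsWalk.tail {u y : V} {n : ℕ} {w : ℕ → V} (hw : IsWalk A u y (n + 1) w) :
    A u (w 1) ∧ IsWalk A (w 1) y n (fun t => w (t + 1)) :=
  ⟨hw.1 ▸ hw.2.2 0 n.succ_pos, rfl, hw.2.1, fun t ht => hw.2.2 (t + 1) (by omega)⟩

lemma cpDist_le_of_isWalk {u v : V} {n : ℕ} {w : ℕ → V} (hw : IsWalk A u v n w) :
    cpDist A u v ≤ n :=
  Nat.sInf_le ⟨w, hw⟩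

lemma exists_isWalk_cpDist {u v : V} {n : ℕ} {w : ℕ → V} (hw : IsWalk A u v n w) :
    ∃ w, IsWalk A u v (cpDist A u v) w :=
  Nat.sInf_mem (s := {n | ∃ w, IsWalk A u v n w}) ⟨n, w, hw⟩

end Walks

section Comp

lemma comp_eq_cons_tail (i : ℕ) (X : List ℕ) : comp i X = i :: (comp i X).tail := by
  unfold comp; split <;> rfl

lemma comp_headI_self {X : List ℕ} (hX : X ≠ []) : comp X.headI X = X := by
  cases X with
  | nil => contradiction
  | cons x T => simp [comp]

lemma tail_comp_prefix_erase (i : ℕ) (X : List ℕ) : (comp i X).tail <+: X.erase i := by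
  unfold comp
  split
  · exact prefix_refl _
  · next hi => simpa [erase_of_not_mem hi] using dropLast_prefix X

lemma tail_comp_sublist (i : ℕ) (X : List ℕ) : (comp i X).tail <+ X :=
  (tail_comp_prefix_erase i X).sublist.trans (erase_sublist)

lemma length_tail_comp (i : ℕ) (X : List ℕ) : (comp i X).tail.length = X.length - 1 := by
  unfold comp
  split
  · next hi => exact length_erase_of_mem hi
  · exact length_dropLast

lemma not_mem_tail_comp {X : List ℕ} (hX : X.Nodup) (i : ℕ) : i ∉ (comp i X).tail := by
  unfold comp
  split
  · exact hX.not_mem_erase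
  · next hi => exact fun h => hi ((dropLast_prefix X).subset h)

lemma filter_comp_prefix {p : ℕ → Bool} {i : ℕ} (hi : p i = false) (X : List ℕ) :
    (comp i X).filter p <+: X.filter p := by
  rw [comp_eq_cons_tail, filter_cons_of_neg (by simp [hi]), ← filter_erase_of_false hi X]
  exact (tail_comp_prefix_erase i X).filter p

lemma filter_tail_comp_prefix {X : List ℕ} (hX : X.Nodup) (p : ℕ → Bool) (i : ℕ) :
    (comp i X).tail.filter p <+: X.filter (fun a => a ≠ i && p a) := by
  rw [← filter_erase_of_false (p := fun a => a ≠ i && p a) (i := i) (by simp) X]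
  have hT : (comp i X).tail.filter p = (comp i X).tail.filter (fun a => a ≠ i && p a) :=
    filter_congr fun a ha => by
      have : a ≠ i := fun h => not_mem_tail_comp hX i (h ▸ ha)
      simp [this]
  rw [hT]
  exact (tail_comp_prefix_erase i X).filter _

end Comp

section Adjacency

variable {Δ D : ℕ}

lemma isVtx_comp {X : List ℕ} (hX : IsVtx Δ D X) (hD : 1 ≤ D) {i : ℕ} (hi1 : 1 ≤ i)
    (hi2 : i ≤ Δ + 1) : IsVtx Δ D (comp i X) := by
  obtain ⟨hlen, hnd, hbd⟩ := hX
  rw [comp_eq_cons_tail]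
  refine ⟨?_, nodup_cons.2 ⟨not_mem_tail_comp hnd i, (tail_comp_sublist i X).nodup hnd⟩, ?_⟩
  · rw [length_cons, length_tail_comp]
    omega
  · intro x hx
    rcases mem_cons.1 hx with rfl | hx
    · exact ⟨hi1, hi2⟩
    · exact hbd x ((tail_comp_sublist i X).subset hx)

lemma adjR_comp {X : List ℕ} (hX : IsVtx Δ D X) (hD : 1 ≤ D) {i : ℕ} (hi1 : 1 ≤ i)
    (hi2 : i ≤ Δ + 1) (hne : i ≠ X.headI) : adjR Δ D 0 X (comp i X) := by
  refine ⟨hX, isVtx_comp hX hD hi1 hi2, ?_⟩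
  by_cases hiX : i ∈ X
  · have hlt : X.idxOf i < X.length := idxOf_lt_length_iff.2 hiX
    refine Or.inl ⟨X.idxOf i, ?_, hX.1 ▸ hlt, ?_⟩
    · cases X with
      | nil => simp at hiX
      | cons x T =>
        rw [idxOf_cons_ne T (b := x) (Ne.symm hne)]
        omega
    · simp [comp, hiX]
  · exact Or.inr ⟨i, hiX, if_neg hiX⟩

lemma exists_comp_of_adjR {r : ℕ} {X Z : List ℕ} (h : adjR Δ D r X Z) : ∃ i, Z = comp i X := by
  obtain ⟨hX, -, ⟨j, -, hj, rfl⟩ | ⟨y, hy, rfl⟩⟩ := h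
  · have hjX : j < X.length := hX.1 ▸ hj
    refine ⟨X[j], ?_⟩
    rw [comp, if_pos (getElem_mem hjX), hX.2.1.erase_getElem j hjX, getD_eq_getElem _ _ hjX]
  · exact ⟨y, (if_neg hy).symm⟩

end Adjacency

def TailPrefix (Y : List ℕ) (m : ℕ) (X : List ℕ) : Prop :=
  Y.drop m <+: X.filter (· ∉ Y.take m)

namespace TailPrefix

variable {X Y : List ℕ} {m : ℕ}

lemma of_length_le (h : Y.length ≤ m) : TailPrefix Y m X := by
  simp [TailPrefix, drop_eq_nil_of_le h]

lemma zero_iff : TailPrefix Y 0 X ↔ Y <+: X := by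
  simp [TailPrefix]

lemma succ (hY : Y.Nodup) (h : TailPrefix Y m X) : TailPrefix Y (m + 1) X := by
  rcases lt_or_ge m Y.length with hm | hm
  · have := h.filter (· ≠ Y[m])
    rw [← getElem_cons_drop hm, filter_cons_of_neg (by simp),
      filter_eq_self.2 (fun a ha => by
        simpa using ne_of_mem_of_not_mem ha (getElem_not_mem_drop_succ hY hm)),
      filter_filter] at this
    rwa [TailPrefix, filter_not_mem_take_succ hm]
  · exact of_length_le (by omega)

lemma mono (hY : Y.Nodup) (h : TailPrefix Y m X) {m' : ℕ} (hmm' : m ≤ m') :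
    TailPrefix Y m' X :=
  Nat.le_induction h (fun _ _ ih => ih.succ hY) m' hmm'

lemma of_comp {i : ℕ} (hi : i ≠ Y.getD m 0) (h : TailPrefix Y m (comp i X)) :
    TailPrefix Y m X := by
  by_cases hiY : i ∈ Y.take m
  · exact h.trans (filter_comp_prefix (by simpa using hiY) X)
  rcases lt_or_ge m Y.length with hm | hm
  · rw [TailPrefix, comp_eq_cons_tail, filter_cons_of_pos (by simpa using hiY),
      ← getElem_cons_drop hm, cons_prefix_cons] at h
    exact absurd (getD_eq_getElem Y 0 hm ▸ h.1.symm) hi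
  · exact of_length_le hm

lemma succ_of_comp (hX : X.Nodup) (hY : Y.Nodup) {i : ℕ} (h : TailPrefix Y m (comp i X)) :
    TailPrefix Y (m + 1) X := by
  rcases lt_or_ge m Y.length with hm | hm
  · by_cases hi : i = Y[m]
    · subst hi
      rw [TailPrefix, comp_eq_cons_tail,
        filter_cons_of_pos (by simpa using getElem_not_mem_take hY hm),
        ← getElem_cons_drop hm, cons_prefix_cons] at h
      rw [TailPrefix, filter_not_mem_take_succ hm]
      exact h.2.trans (filter_tail_comp_prefix hX _ _)
    · exact (h.of_comp (by rwa [getD_eq_getElem _ _ hm])).succ hY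
  · exact of_length_le (by omega)

lemma comp_getElem (hX : X.Nodup) (hY : Y.Nodup) (hlen : X.length = Y.length)
    (hm : m < Y.length) (h : TailPrefix Y (m + 1) X) : TailPrefix Y m (comp Y[m] X) := by
  rw [TailPrefix, filter_not_mem_take_succ hm] at h
  rw [TailPrefix, comp_eq_cons_tail,
    filter_cons_of_pos (by simpa using getElem_not_mem_take hY hm),
    ← getElem_cons_drop hm, cons_prefix_cons]
  refine ⟨rfl, prefix_of_prefix_length_le h (filter_tail_comp_prefix hX _ _) ?_⟩
  have := length_le_length_filter_not_mem_add ((tail_comp_sublist Y[m] X).nodup hX) (Y.take m)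
  rw [length_tail_comp, length_take] at this
  rw [length_drop]
  omega

end TailPrefix

section Distance

variable {Δ D : ℕ}

lemma tailPrefix_of_isWalk {r : ℕ} {X Y : List ℕ} (hY : Y.Nodup) {n : ℕ} {w : ℕ → List ℕ}
    (hw : IsWalk (adjR Δ D r) X Y n w) : TailPrefix Y n X := by
  induction n generalizing X w with
  | zero =>
    obtain rfl : X = Y := hw.1.symm.trans hw.2.1
    exact TailPrefix.zero_iff.2 (prefix_refl X)
  | succ n ih =>
    obtain ⟨hadj, htail⟩ := hw.tail
    obtain ⟨i, hi⟩ := exists_comp_of_adjR hadj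
    exact (hi ▸ ih htail).succ_of_comp hadj.1.2.1 hY

lemma exists_isWalk_of_tailPrefix {X Y : List ℕ} (hX : IsVtx Δ D X) (hY : IsVtx Δ D Y) {m : ℕ}
    (h : TailPrefix Y m X) : ∃ n ≤ m, ∃ w, IsWalk (adjR Δ D 0) X Y n w := by
  induction m generalizing X with
  | zero =>
    obtain rfl : X = Y := ((TailPrefix.zero_iff.1 h).eq_of_length (hY.1.trans hX.1.symm)).symm
    exact ⟨0, le_rfl, _, isWalk_zero X⟩
  | succ m ih =>
    rcases lt_or_ge m Y.length with hm | hm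
    · have hD : 1 ≤ D := by have := hY.1; omega
      have hc := hY.2.2 _ (getElem_mem hm)
      obtain ⟨n, hn, w, hw⟩ := ih (isVtx_comp hX hD hc.1 hc.2)
        (h.comp_getElem hX.2.1 hY.2.1 (hX.1.trans hY.1.symm) hm)
      by_cases hhead : Y[m] = X.headI
      · rw [hhead, comp_headI_self (ne_nil_of_length_pos (by rw [hX.1]; omega))] at hw
        exact ⟨n, by omega, w, hw⟩
      · exact ⟨n + 1, by omega, _, IsWalk.cons (adjR_comp hX hD hc.1 hc.2 hhead) hw⟩
    · obtain ⟨n, hn, hw⟩ := ih hX (.of_length_le hm)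
      exact ⟨n, by omega, hw⟩

lemma cpDist_le_iff {X Y : List ℕ} (hX : IsVtx Δ D X) (hY : IsVtx Δ D Y) {m : ℕ} :
    cpDist (adjR Δ D 0) X Y ≤ m ↔ TailPrefix Y m X := by
  constructor
  · intro h
    obtain ⟨n, -, w, hw⟩ :=
      exists_isWalk_of_tailPrefix hX hY (TailPrefix.of_length_le (m := Y.length) le_rfl)
    obtain ⟨w', hw'⟩ := exists_isWalk_cpDist hw
    exact (tailPrefix_of_isWalk hY.2.1 hw').mono hY.2.1 h
  · intro h
    obtain ⟨n, hn, w, hw⟩ := exists_isWalk_of_tailPrefix hX hY h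
    exact (cpDist_le_of_isWalk hw).trans hn

end Distance

theorem dist_comp_general (Δ D : ℕ) (hD : 1 ≤ D)
    (X Y : List ℕ) (hX : IsVtx Δ D X) (hY : IsVtx Δ D Y)
    (k : ℕ) (hk : cpDist (adjR Δ D 0) X Y = k) (hk1 : 1 ≤ k)
    (i : ℕ) (hi1 : 1 ≤ i) (hi2 : i ≤ Δ + 1) :
    (i = Y.getD (k - 1) 0 → cpDist (adjR Δ D 0) (comp i X) Y = k - 1) ∧
    (i ≠ Y.getD (k - 1) 0 → k ≤ cpDist (adjR Δ D 0) (comp i X) Y) := by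
  obtain ⟨m, rfl⟩ : ∃ m, k = m + 1 := ⟨k - 1, by omega⟩
  rw [add_tsub_cancel_right]
  have hZ := isVtx_comp hX hD hi1 hi2
  have hXk : TailPrefix Y (m + 1) X := (cpDist_le_iff hX hY).1 hk.le
  have hXm : ¬ TailPrefix Y m X := fun h => by
    have := (cpDist_le_iff hX hY).2 h
    omega
  have hlower : m ≤ cpDist (adjR Δ D 0) (comp i X) Y := by
    by_contra! hlt
    have := (cpDist_le_iff hX hY).2 (((cpDist_le_iff hZ hY).1 le_rfl).succ_of_comp hX.2.1 hY.2.1)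
    omega
  refine ⟨fun hi => le_antisymm ((cpDist_le_iff hZ hY).2 ?_) hlower, fun hi => ?_⟩
  · have hm : m < Y.length := by
      by_contra! hm
      exact hXm (.of_length_le hm)
    rw [hi, getD_eq_getElem _ _ hm]
    exact hXk.comp_getElem hX.2.1 hY.2.1 (hX.1.trans hY.1.symm) hm
  · by_contra! hlt
    exact hXm (((cpDist_le_iff hZ hY).1 (by omega)).of_comp hi)

/-- in `Γ_Δ(D)` with `k = d(X, Y) ≥ 1` and `i ≠ x_1`, we have
`d(i∘X, Y) ≥ d(X, Y)` unless `i = y_k`, in which case `d(i∘X, Y) = k - 1`. -/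
theorem dist_comp (Δ D : ℕ) (hD : 1 ≤ D) (hΔ : D ≤ Δ)
    (X Y : List ℕ) (hX : IsVtx Δ D X) (hY : IsVtx Δ D Y)
    (k : ℕ) (hk : cpDist (adjR Δ D 0) X Y = k) (hk1 : 1 ≤ k)
    (i : ℕ) (hi1 : 1 ≤ i) (hi2 : i ≤ Δ + 1) (hne : i ≠ X.headI) :
    (i = Y.getD (k - 1) 0 → cpDist (adjR Δ D 0) (comp i X) Y = k - 1) ∧
    (i ≠ Y.getD (k - 1) 0 → k ≤ cpDist (adjR Δ D 0) (comp i X) Y) :=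
  dist_comp_general Δ D hD X Y hX hY k hk hk1 i hi1 hi2
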